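/- arXiv:math/0007150 — 7 statements merged into one kernel-verified Lean document; each statement's English description precedes it below -/
import Mathlib

section
/- Let r be an imaginary quaternion of unit length and φ a real number. Then for every imaginary quaternion q, the conjugation (cos(φ/2) + sin(φ/2)·r) · q · (cos(φ/2) + sin(φ/2)·r)⁻¹ is the rotation of q about the axis r through angle φ. -/
/-- Euclidean scalar product on imaginary quaternions (Im(ℍ) ≅ ℝ³). -/
noncomputable def qdot (q r : Quaternion ℝ) : ℝ :=
  q.imI * r.imI + q.imJ * r.imJ + q.imK * r.imK

/-- Cross product on imaginary quaternions (Im(ℍ) ≅ ℝ³). -/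
noncomputable def qcross (q r : Quaternion ℝ) : Quaternion ℝ :=
  ⟨0, q.imJ * r.imK - q.imK * r.imJ,
      q.imK * r.imI - q.imI * r.imK,
      q.imI * r.imJ - q.imJ * r.imI⟩

/-- The rotation of an imaginary quaternion `q` about the unit axis `r` through
angle `φ` (Rodrigues' formula: it fixes `r` and rotates the orthogonal
complement of `r` in Im(ℍ) by `φ`). -/
noncomputable def rotateAboutAxis (r : Quaternion ℝ) (φ : ℝ) (q : Quaternion ℝ) :
    Quaternion ℝ :=
  Real.cos φ • q + Real.sin φ • qcross r q + ((1 - Real.cos φ) * qdot r q) • r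

theorem qcross_re (q r : Quaternion ℝ) : (qcross q r).re = 0 := rfl
theorem qcross_imI (q r : Quaternion ℝ) : (qcross q r).imI = q.imJ * r.imK - q.imK * r.imJ := rfl
theorem qcross_imJ (q r : Quaternion ℝ) : (qcross q r).imJ = q.imK * r.imI - q.imI * r.imK := rfl
theorem qcross_imK (q r : Quaternion ℝ) : (qcross q r).imK = q.imI * r.imJ - q.imJ * r.imI := rfl

set_option maxHeartbeats 1000000 in
/-- Conjugation by `cos(φ/2) + sin(φ/2) r` rotates an imaginary quaternion `q`
about the axis `r` (a unit imaginary quaternion) through the angle `φ`. -/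
theorem quaternion_conjugation_is_rotation (r : Quaternion ℝ) (φ : ℝ)
    (hr : r.re = 0) (hr1 : ‖r‖ = 1) (q : Quaternion ℝ) (hq : q.re = 0) :
    ((Real.cos (φ / 2) : Quaternion ℝ) + Real.sin (φ / 2) • r) * q *
        ((Real.cos (φ / 2) : Quaternion ℝ) + Real.sin (φ / 2) • r)⁻¹ =
      rotateAboutAxis r φ q := by
  have hns : Quaternion.normSq r = 1 := by
    rw [Quaternion.normSq_eq_norm_mul_self, hr1]; ring
  have hn : r.imI ^ 2 + r.imJ ^ 2 + r.imK ^ 2 = 1 := by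
    rw [Quaternion.normSq_def', hr] at hns
    nlinarith [hns]
  set c := Real.cos (φ / 2) with hc
  set s := Real.sin (φ / 2) with hs
  have hcs : c ^ 2 + s ^ 2 = 1 := by
    rw [hc, hs]; nlinarith [Real.sin_sq_add_cos_sq (φ / 2)]
  have hcos : Real.cos φ = c ^ 2 - s ^ 2 := by
    have h2 : φ = φ / 2 + φ / 2 := by ring
    rw [h2, Real.cos_add]; ring
  have hsin : Real.sin φ = 2 * s * c := by
    have h2 : φ = φ / 2 + φ / 2 := by ring
    rw [h2, Real.sin_add]; ring
  have hu : ((c : Quaternion ℝ) + s • r)⁻¹ = (c : Quaternion ℝ) - s • r := by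
    rw [Quaternion.inv_def]
    have h1 : Quaternion.normSq ((c : Quaternion ℝ) + s • r) = 1 := by
      simp only [Quaternion.normSq_def', Quaternion.re_add, Quaternion.imI_add,
        Quaternion.imJ_add, Quaternion.imK_add, Quaternion.re_coe, Quaternion.imI_coe,
        Quaternion.imJ_coe, Quaternion.imK_coe, Quaternion.re_smul, Quaternion.imI_smul,
        Quaternion.imJ_smul, Quaternion.imK_smul, hr, smul_eq_mul]
      nlinarith [hn, hcs]
    rw [h1]
    ext <;> simp [hr] <;> ring
  rw [hu, rotateAboutAxis, hcos, hsin]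
  ext
  · simp [qcross_re, qcross_imI, qcross_imJ, qcross_imK, qdot, Quaternion.re_mul, hr, hq]
    ring
  · simp only [qcross_re, qcross_imI, qcross_imJ, qcross_imK, qdot, Quaternion.re_mul, Quaternion.imI_mul, Quaternion.imJ_mul,
      Quaternion.imK_mul, Quaternion.re_add, Quaternion.imI_add, Quaternion.imJ_add,
      Quaternion.imK_add, Quaternion.re_sub, Quaternion.imI_sub, Quaternion.imJ_sub,
      Quaternion.imK_sub, Quaternion.re_coe, Quaternion.imI_coe, Quaternion.imJ_coe,
      Quaternion.imK_coe, Quaternion.re_smul, Quaternion.imI_smul, Quaternion.imJ_smul,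
      Quaternion.imK_smul, hr, hq, smul_eq_mul]
    linear_combination (-(s ^ 2 * q.imI)) * hn +
      (r.imI * r.imK * q.imK + r.imI * r.imJ * q.imJ + r.imI ^ 2 * q.imI) * hcs
  · simp only [qcross_re, qcross_imI, qcross_imJ, qcross_imK, qdot, Quaternion.re_mul, Quaternion.imI_mul, Quaternion.imJ_mul,
      Quaternion.imK_mul, Quaternion.re_add, Quaternion.imI_add, Quaternion.imJ_add,
      Quaternion.imK_add, Quaternion.re_sub, Quaternion.imI_sub, Quaternion.imJ_sub,
      Quaternion.imK_sub, Quaternion.re_coe, Quaternion.imI_coe, Quaternion.imJ_coe,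
      Quaternion.imK_coe, Quaternion.re_smul, Quaternion.imI_smul, Quaternion.imJ_smul,
      Quaternion.imK_smul, hr, hq, smul_eq_mul]
    linear_combination (-(s ^ 2 * q.imJ)) * hn +
      (r.imJ * r.imK * q.imK + r.imJ ^ 2 * q.imJ + r.imI * r.imJ * q.imI) * hcs
  · simp only [qcross_re, qcross_imI, qcross_imJ, qcross_imK, qdot, Quaternion.re_mul, Quaternion.imI_mul, Quaternion.imJ_mul,
      Quaternion.imK_mul, Quaternion.re_add, Quaternion.imI_add, Quaternion.imJ_add,
      Quaternion.imK_add, Quaternion.re_sub, Quaternion.imI_sub, Quaternion.imJ_sub,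
      Quaternion.imK_sub, Quaternion.re_coe, Quaternion.imI_coe, Quaternion.imJ_coe,
      Quaternion.imK_coe, Quaternion.re_smul, Quaternion.imI_smul, Quaternion.imJ_smul,
      Quaternion.imK_smul, hr, hq, smul_eq_mul]
    linear_combination (-q.imK + c ^ 2 * q.imK) * hn +
      (q.imK + r.imJ * r.imK * q.imJ - r.imJ ^ 2 * q.imK + r.imI * r.imK * q.imI -
        r.imI ^ 2 * q.imK) * hcs
end

section
/- Let S: ℝ × ℝ → Im(ℍ) with |S| = 1, let U(λ) = λS and V(λ) = -2λ²S - λ S_x S. Then the zero curvature condition U_t - V_x + [U,V] = 0 holding for all λ ∈ ℝ is equivalent to the isotropic Heisenberg magnet equation S_t = S × S_{xx}. -/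
open Quaternion

noncomputable def reCLM : Quaternion ℝ →L[ℝ] ℝ :=
  LinearMap.toContinuousLinearMap (QuaternionAlgebra.reₗ (-1 : ℝ) 0 (-1))

lemma reCLM_apply (q : Quaternion ℝ) : reCLM q = q.re := rfl

lemma re_deriv_zero {f : ℝ → Quaternion ℝ} {f' : Quaternion ℝ} {x : ℝ}
    (hf : HasDerivAt f f' x) (h0 : ∀ y, (f y).re = 0) : f'.re = 0 := by
  have h1 : HasDerivAt (⇑reCLM ∘ f) (reCLM f') x :=
    reCLM.hasFDerivAt.comp_hasDerivAt x hf
  have h2 : (⇑reCLM ∘ f) = fun _ : ℝ => (0 : ℝ) := by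
    funext y
    simp [Function.comp, reCLM_apply, h0 y]
  rw [h2] at h1
  have h3 : reCLM f' = 0 := h1.unique (hasDerivAt_const x 0)
  rw [reCLM_apply] at h3
  exact h3

lemma re_mul_comm' (a b : Quaternion ℝ) : (a * b).re = (b * a).re := by
  simp only [Quaternion.re_mul]; ring

lemma mul_self_im (p : Quaternion ℝ) (h : p.re = 0) :
    p * p = (((p * p).re : ℝ) : Quaternion ℝ) := by
  ext <;>
    simp [Quaternion.re_mul, Quaternion.imI_mul, Quaternion.imJ_mul, Quaternion.imK_mul, h] <;>
    ring

lemma qcross_eq (a b : Quaternion ℝ) (ha : a.re = 0) (hb : b.re = 0) :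
    qcross a b = a * b - (((a * b).re : ℝ) : Quaternion ℝ) := by
  ext <;>
    simp [qcross, Quaternion.re_mul, Quaternion.imI_mul, Quaternion.imJ_mul,
      Quaternion.imK_mul, ha, hb] <;>
    ring

lemma qcross_formula (s p q : Quaternion ℝ) (hs : s.re = 0) (hp : p.re = 0) (hq : q.re = 0)
    (h2 : q * s + p * p + (p * p + s * q) = 0) :
    qcross s q = -(q * s) - p * p := by
  have hre : (s * q).re = -((p * p).re) := by
    have h3 := congrArg QuaternionAlgebra.re h2
    simp only [Quaternion.re_add, Quaternion.re_zero] at h3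
    have h4 := re_mul_comm' q s
    linarith
  have hcoe : (((s * q).re : ℝ) : Quaternion ℝ) = -(p * p) := by
    rw [hre, Quaternion.coe_neg, ← mul_self_im p hp]
  rw [qcross_eq s q hs hq, hcoe]
  apply eq_of_sub_eq_zero
  rw [← h2]; abel

lemma pointwise (S : ℝ → ℝ → Quaternion ℝ)
    (hS : ContDiff ℝ (⊤ : ℕ∞) fun p : ℝ × ℝ => S p.1 p.2)
    (him : ∀ x t, (S x t).re = 0)
    (hnorm : ∀ x t, ‖S x t‖ = 1) (x t : ℝ) :
    (∀ lam : ℝ,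
        deriv (fun t' => lam • S x t') t -
          deriv (fun x' => (-2 * lam ^ 2) • S x' t -
            lam • (deriv (fun y => S y t) x' * S x' t)) x +
          ((lam • S x t) *
              ((-2 * lam ^ 2) • S x t - lam • (deriv (fun y => S y t) x * S x t)) -
            ((-2 * lam ^ 2) • S x t - lam • (deriv (fun y => S y t) x * S x t)) *
              (lam • S x t)) = 0) ↔
      deriv (fun t' => S x t') t =
        qcross (S x t) (deriv (fun y => deriv (fun z => S z t) y) x) := by
  have hg : ContDiff ℝ (⊤ : ℕ∞) (fun y => S y t) :=
    (hS.of_le (by simp)).comp (contDiff_id.prodMk contDiff_const)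
  have hgd : Differentiable ℝ (fun y => S y t) := (contDiff_infty_iff_deriv.mp hg).1
  have hdg : ContDiff ℝ (⊤ : ℕ∞) (deriv (fun y => S y t)) := (contDiff_infty_iff_deriv.mp hg).2
  have hdgd : Differentiable ℝ (deriv (fun y => S y t)) := (contDiff_infty_iff_deriv.mp hdg).1
  have hh : ContDiff ℝ (⊤ : ℕ∞) (fun t' => S x t') :=
    (hS.of_le (by simp)).comp (contDiff_const.prodMk contDiff_id)
  have hhd : Differentiable ℝ (fun t' => S x t') := (contDiff_infty_iff_deriv.mp hh).1
  -- eta-reduce the second derivative in the goal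
  have ee : (fun y => deriv (fun z => S z t) y) = deriv (fun z => S z t) := rfl
  rw [ee]
  -- unit imaginary: S * S = -1
  have hss_all : ∀ y, S y t * S y t = -1 := by
    intro y
    have hstar : star (S y t) = -(S y t) := by
      ext <;> simp [him y t]
    have h1 : S y t * star (S y t) = ((normSq (S y t) : ℝ) : Quaternion ℝ) :=
      Quaternion.self_mul_star _
    rw [hstar, mul_neg] at h1
    have h2 : normSq (S y t) = 1 := by
      rw [Quaternion.normSq_eq_norm_mul_self, hnorm y t]; ring
    rw [h2] at h1
    have h3 := neg_eq_iff_eq_neg.mp h1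
    simpa using h3
  have hder1 : ∀ y,
      deriv (fun z => S z t) y * S y t + S y t * deriv (fun z => S z t) y = 0 := by
    intro y
    have h1 : HasDerivAt (fun z => S z t * S z t)
        (deriv (fun z => S z t) y * S y t + S y t * deriv (fun z => S z t) y) y :=
      (hgd y).hasDerivAt.mul (hgd y).hasDerivAt
    have h2 : (fun z : ℝ => S z t * S z t) = fun _ => (-1 : Quaternion ℝ) := funext hss_all
    rw [h2] at h1
    exact h1.unique (hasDerivAt_const y (-1))
  have hder2 :
      deriv (deriv (fun z => S z t)) x * S x t +
        deriv (fun z => S z t) x * deriv (fun z => S z t) x +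
        (deriv (fun z => S z t) x * deriv (fun z => S z t) x +
          S x t * deriv (deriv (fun z => S z t)) x) = 0 := by
    have h1 : HasDerivAt
        (fun y => deriv (fun z => S z t) y * S y t + S y t * deriv (fun z => S z t) y)
        (deriv (deriv (fun z => S z t)) x * S x t +
          deriv (fun z => S z t) x * deriv (fun z => S z t) x +
          (deriv (fun z => S z t) x * deriv (fun z => S z t) x +
            S x t * deriv (deriv (fun z => S z t)) x)) x :=
      ((hdgd x).hasDerivAt.mul (hgd x).hasDerivAt).add
        ((hgd x).hasDerivAt.mul (hdgd x).hasDerivAt)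
    have h2 : (fun y => deriv (fun z => S z t) y * S y t + S y t * deriv (fun z => S z t) y)
        = fun _ => (0 : Quaternion ℝ) := funext hder1
    rw [h2] at h1
    exact h1.unique (hasDerivAt_const x 0)
  have hpre : ∀ y, (deriv (fun z => S z t) y).re = 0 := fun y =>
    re_deriv_zero (hgd y).hasDerivAt (fun z => him z t)
  have hqre : (deriv (deriv (fun z => S z t)) x).re = 0 :=
    re_deriv_zero (hdgd x).hasDerivAt hpre
  have hss := hss_all x
  have hsp : S x t * deriv (fun z => S z t) x = -(deriv (fun z => S z t) x * S x t) :=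
    eq_neg_of_add_eq_zero_right (hder1 x)
  have hs1 : S x t * (deriv (fun z => S z t) x * S x t) = deriv (fun z => S z t) x := by
    rw [← mul_assoc, hsp, neg_mul, mul_assoc, hss, mul_neg_one, neg_neg]
  have hs2 : deriv (fun z => S z t) x * S x t * S x t = -(deriv (fun z => S z t) x) := by
    rw [mul_assoc, hss, mul_neg_one]
  have hqc : qcross (S x t) (deriv (deriv (fun z => S z t)) x) =
      -(deriv (deriv (fun z => S z t)) x * S x t) -
        deriv (fun z => S z t) x * deriv (fun z => S z t) x :=
    qcross_formula _ _ _ (him x t) (hpre x) hqre hder2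
  have hZC : ∀ lam : ℝ,
      deriv (fun t' => lam • S x t') t -
        deriv (fun x' => (-2 * lam ^ 2) • S x' t -
          lam • (deriv (fun y => S y t) x' * S x' t)) x +
        ((lam • S x t) *
            ((-2 * lam ^ 2) • S x t - lam • (deriv (fun y => S y t) x * S x t)) -
          ((-2 * lam ^ 2) • S x t - lam • (deriv (fun y => S y t) x * S x t)) *
            (lam • S x t))
      = lam • (deriv (fun t' => S x t') t +
          (deriv (deriv (fun z => S z t)) x * S x t +
            deriv (fun z => S z t) x * deriv (fun z => S z t) x)) := by
    intro lam
    have e1 : deriv (fun t' => lam • S x t') t = lam • deriv (fun t' => S x t') t :=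
      (((hhd t).hasDerivAt).const_smul lam).deriv
    have e2 : deriv (fun x' => (-2 * lam ^ 2) • S x' t -
          lam • (deriv (fun y => S y t) x' * S x' t)) x
        = (-2 * lam ^ 2) • deriv (fun z => S z t) x -
          lam • (deriv (deriv (fun z => S z t)) x * S x t +
            deriv (fun z => S z t) x * deriv (fun z => S z t) x) := by
      have d1 : HasDerivAt (fun x' => (-2 * lam ^ 2) • S x' t)
          ((-2 * lam ^ 2) • deriv (fun z => S z t) x) x :=
        ((hgd x).hasDerivAt).const_smul (-2 * lam ^ 2)
      have d2 : HasDerivAt (fun x' => lam • (deriv (fun y => S y t) x' * S x' t))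
          (lam • (deriv (deriv (fun z => S z t)) x * S x t +
            deriv (fun z => S z t) x * deriv (fun z => S z t) x)) x :=
        ((hdgd x).hasDerivAt.mul (hgd x).hasDerivAt).const_smul lam
      exact (d1.sub d2).deriv
    rw [e1, e2]
    simp only [mul_sub, sub_mul, smul_mul_assoc, mul_smul_comm, smul_smul, hs1, hs2]
    module
  constructor
  · intro hzc
    have hA : deriv (fun t' => S x t') t +
        (deriv (deriv (fun z => S z t)) x * S x t +
          deriv (fun z => S z t) x * deriv (fun z => S z t) x) = 0 := by
      have h1 := (hZC 1).symm.trans (hzc 1)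
      simpa using h1
    rw [hqc]
    have h2 : deriv (fun t' => S x t') t =
        -(deriv (deriv (fun z => S z t)) x * S x t +
          deriv (fun z => S z t) x * deriv (fun z => S z t) x) :=
      eq_neg_of_add_eq_zero_left hA
    rw [h2]; abel
  · intro hheis lam
    rw [hZC lam]
    have hA : deriv (fun t' => S x t') t +
        (deriv (deriv (fun z => S z t)) x * S x t +
          deriv (fun z => S z t) x * deriv (fun z => S z t) x) = 0 := by
      rw [hheis, hqc]; abel
    rw [hA, smul_zero]

/-- For a smooth map `S : ℝ × ℝ → Im(ℍ)` with `|S| = 1`, the zero curvature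
condition `U_t - V_x + [U,V] = 0` for `U(λ) = λ S`,
`V(λ) = -2λ² S - λ S_x S`, holding for all real `λ`, is equivalent to the
isotropic Heisenberg magnet equation `S_t = S × S_xx`. -/
theorem zero_curvature_iff_heisenberg (S : ℝ → ℝ → Quaternion ℝ)
    (hS : ContDiff ℝ (⊤ : ℕ∞) fun p : ℝ × ℝ => S p.1 p.2)
    (him : ∀ x t, (S x t).re = 0)
    (hnorm : ∀ x t, ‖S x t‖ = 1) :
    (∀ lam x t : ℝ,
        deriv (fun t' => lam • S x t') t -
          deriv (fun x' => (-2 * lam ^ 2) • S x' t -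
            lam • (deriv (fun y => S y t) x' * S x' t)) x +
          ((lam • S x t) *
              ((-2 * lam ^ 2) • S x t - lam • (deriv (fun y => S y t) x * S x t)) -
            ((-2 * lam ^ 2) • S x t - lam • (deriv (fun y => S y t) x * S x t)) *
              (lam • S x t)) = 0) ↔
      (∀ x t : ℝ,
        deriv (fun t' => S x t') t =
          qcross (S x t) (deriv (fun y => deriv (fun z => S z t) y) x)) := by
  constructor
  · intro h x t
    exact (pointwise S hS him hnorm x t).mp (fun lam => h lam x t)
  · intro h lam x t
    exact (pointwise S hS him hnorm x t).mpr (h x t) lam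
end

section
/- Let γ: ℝ → ℝ³ be arclength parametrized and v: ℝ → ℝ³ a vector field along γ of constant length l > 0 satisfying v' = 2√(b - b²)·(v × γ')/l + 2b·⟨v,γ'⟩/l²·v - 2b·γ' for some constant b with 0 ≤ b ≤ 1. Then the curve γ̃ = γ + v is also arclength parametrized, i.e. |γ̃'| ≡ 1. -/
noncomputable def cross3 (a b : EuclideanSpace ℝ (Fin 3)) : EuclideanSpace ℝ (Fin 3) :=
  (EuclideanSpace.equiv (Fin 3) ℝ).symm
    ![a 1 * b 2 - a 2 * b 1, a 2 * b 0 - a 0 * b 2, a 0 * b 1 - a 1 * b 0]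

lemma inner3 (a b : EuclideanSpace ℝ (Fin 3)) :
    (inner ℝ a b : ℝ) = a 0 * b 0 + a 1 * b 1 + a 2 * b 2 := by
  simp [PiLp.inner_apply, Fin.sum_univ_three, mul_comm]

lemma cross3_apply (a b : EuclideanSpace ℝ (Fin 3)) :
    cross3 a b 0 = a 1 * b 2 - a 2 * b 1 ∧
    cross3 a b 1 = a 2 * b 0 - a 0 * b 2 ∧
    cross3 a b 2 = a 0 * b 1 - a 1 * b 0 := by
  refine ⟨?_, ?_, ?_⟩ <;> simp [cross3]

lemma inner_cross_left (a b : EuclideanSpace ℝ (Fin 3)) :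
    (inner ℝ (cross3 a b) a : ℝ) = 0 := by
  obtain ⟨h0, h1, h2⟩ := cross3_apply a b
  rw [inner3, h0, h1, h2]; ring

lemma inner_cross_right (a b : EuclideanSpace ℝ (Fin 3)) :
    (inner ℝ (cross3 a b) b : ℝ) = 0 := by
  obtain ⟨h0, h1, h2⟩ := cross3_apply a b
  rw [inner3, h0, h1, h2]; ring

lemma inner_cross_self (a b : EuclideanSpace ℝ (Fin 3)) :
    (inner ℝ (cross3 a b) (cross3 a b) : ℝ) =
      (inner ℝ a a : ℝ) * (inner ℝ b b : ℝ) - (inner ℝ a b : ℝ) ^ 2 := by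
  obtain ⟨h0, h1, h2⟩ := cross3_apply a b
  rw [inner3, inner3, inner3, inner3, h0, h1, h2]; ring

/-- If `v` is a vector field of constant length `l` along an arclength
parametrized curve `γ` satisfying the Bäcklund evolution equation
`v' = 2√(b-b²) (v × γ')/l + 2b ⟨v,γ'⟩ v/l² - 2b γ'` with `0 ≤ b ≤ 1`, then the
Bäcklund transform `γ̃ = γ + v` is again arclength parametrized. -/
theorem backlund_transform_arclength (γ v : ℝ → EuclideanSpace ℝ (Fin 3))
    (l b : ℝ) (hl : 0 < l) (hb0 : 0 ≤ b) (hb1 : b ≤ 1)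
    (hγ : ContDiff ℝ (⊤ : ℕ∞) γ) (hv : ContDiff ℝ (⊤ : ℕ∞) v)
    (harc : ∀ x, ‖deriv γ x‖ = 1)
    (hlen : ∀ x, ‖v x‖ = l)
    (hevol : ∀ x, deriv v x =
      (2 * Real.sqrt (b - b ^ 2) / l) • cross3 (v x) (deriv γ x) +
      ((2 * b / l ^ 2) * (inner ℝ (v x) (deriv γ x) : ℝ)) • v x -
      (2 * b) • deriv γ x) :
    ∀ x, ‖deriv (fun y => γ y + v y) x‖ = 1 := by
  intro x
  have hdγ : DifferentiableAt ℝ γ x := (hγ.differentiable (by simp)).differentiableAt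
  have hdv : DifferentiableAt ℝ v x := (hv.differentiable (by simp)).differentiableAt
  have hderiv : deriv (fun y => γ y + v y) x = deriv γ x + deriv v x :=
    deriv_add hdγ hdv
  rw [hderiv]
  set T := deriv γ x with hTdef
  set u := v x with hudef
  have hT : (inner ℝ T T : ℝ) = 1 := by
    rw [real_inner_self_eq_norm_sq, harc x]; norm_num
  have hu : (inner ℝ u u : ℝ) = l ^ 2 := by
    rw [real_inner_self_eq_norm_sq, hlen x]
  obtain ⟨c, hc⟩ : ∃ c : ℝ, (inner ℝ u T : ℝ) = c := ⟨_, rfl⟩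
  set s := Real.sqrt (b - b ^ 2) with hsdef
  have hs2 : s ^ 2 = b - b ^ 2 := Real.sq_sqrt (by nlinarith)
  have hw : deriv v x = (2 * s / l) • cross3 u T + ((2 * b / l ^ 2) * c) • u - (2 * b) • T := by
    have h := hevol x
    rw [← hTdef, ← hudef, hc] at h
    exact h
  have hX1 : (inner ℝ (cross3 u T) u : ℝ) = 0 := inner_cross_left u T
  have hX2 : (inner ℝ (cross3 u T) T : ℝ) = 0 := inner_cross_right u T
  have hX1' : (inner ℝ u (cross3 u T) : ℝ) = 0 := by rw [real_inner_comm]; exact hX1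
  have hX2' : (inner ℝ T (cross3 u T) : ℝ) = 0 := by rw [real_inner_comm]; exact hX2
  have hcomm : (inner ℝ T u : ℝ) = c := by rw [real_inner_comm]; exact hc
  have hXX : (inner ℝ (cross3 u T) (cross3 u T) : ℝ) = l ^ 2 * 1 - c ^ 2 := by
    rw [inner_cross_self, hT, hu, hc]
  have key : (inner ℝ (T + deriv v x) (T + deriv v x) : ℝ) = 1 := by
    rw [hw]
    simp only [inner_add_left, inner_add_right, inner_sub_left, inner_sub_right,
      real_inner_smul_left, real_inner_smul_right, hX1, hX2, hX1', hX2', hXX, hT, hu,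
      hcomm, hc]
    have hl' : l ≠ 0 := ne_of_gt hl
    field_simp
    linear_combination (4 * l * (l ^ 2 - c ^ 2)) * hs2
  have hn : ‖T + deriv v x‖ ^ 2 = 1 := by rw [← real_inner_self_eq_norm_sq]; exact key
  nlinarith [norm_nonneg (T + deriv v x), hn]
end

section
/- Let v be a vector field along an arclength-parametrized curve γ satisfying v' = 2√(b-b²)(v × γ')/l + 2b⟨v,γ'⟩v/l² - 2bγ' with |v(0)| = l and 0 ≤ b ≤ 1. Then ⟨v', v⟩ = 0 everywhere, hence |v| ≡ l is constant; in particular the Bäcklund transform γ̃ = γ + v stays at constant distance l from γ. -/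
lemma cross3_inner_self (a c : EuclideanSpace ℝ (Fin 3)) :
    (inner ℝ (cross3 a c) a : ℝ) = 0 := by
  simp [cross3, PiLp.inner_apply, Fin.sum_univ_three, EuclideanSpace.equiv]
  ring

/-- For a vector field `v` along an arclength parametrized curve `γ` satisfying
`v' = 2√(b-b²)(v × γ')/l + 2b⟨v,γ'⟩v/l² - 2bγ'` with `|v(0)| = l`, one has
`⟨v', v⟩ = 0` everywhere, hence `|v| ≡ l`; in particular the Bäcklund transform
`γ̃ = γ + v` stays at constant distance `l` from `γ`. -/
theorem backlund_transform_constant_distance (γ v : ℝ → EuclideanSpace ℝ (Fin 3))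
    (l b : ℝ) (hl : 0 < l) (hb0 : 0 ≤ b) (hb1 : b ≤ 1)
    (hγ : ContDiff ℝ (⊤ : ℕ∞) γ) (hv : ContDiff ℝ (⊤ : ℕ∞) v)
    (harc : ∀ x, ‖deriv γ x‖ = 1)
    (hlen0 : ‖v 0‖ = l)
    (hevol : ∀ x, deriv v x =
      (2 * Real.sqrt (b - b ^ 2) / l) • cross3 (v x) (deriv γ x) +
      ((2 * b / l ^ 2) * (inner ℝ (v x) (deriv γ x) : ℝ)) • v x -
      (2 * b) • deriv γ x) :
    (∀ x, (inner ℝ (deriv v x) (v x) : ℝ) = 0) ∧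
    (∀ x, ‖v x‖ = l) ∧
    (∀ x, ‖(γ x + v x) - γ x‖ = l) := by
  have hdv : Differentiable ℝ v := hv.differentiable (by simp)
  have hdγ : Continuous (deriv γ) := hγ.continuous_deriv (by simp)
  -- g and f
  set g : ℝ → ℝ := fun x => (4 * b / l ^ 2) * (inner ℝ (v x) (deriv γ x) : ℝ) with hg
  set f : ℝ → ℝ := fun x => ‖v x‖ ^ 2 - l ^ 2 with hf
  have hcontg : Continuous g := by
    have h1 : Continuous fun x => (inner ℝ (v x) (deriv γ x) : ℝ) :=
      hv.continuous.inner (hdγ)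
    exact continuous_const.mul h1
  -- key inner product computation
  have hkey : ∀ x, (inner ℝ (deriv v x) (v x) : ℝ)
      = (2 * b / l ^ 2) * (inner ℝ (v x) (deriv γ x) : ℝ) * (‖v x‖ ^ 2 - l ^ 2) := by
    intro x
    rw [hevol x]
    rw [inner_sub_left, inner_add_left, real_inner_smul_left, real_inner_smul_left,
      real_inner_smul_left, cross3_inner_self, real_inner_self_eq_norm_sq]
    rw [real_inner_comm (deriv γ x) (v x)]
    have hl' : l ≠ 0 := ne_of_gt hl
    field_simp
    ring
  -- f has derivative g * f
  have hf' : ∀ x, HasDerivAt f (g x * f x) x := by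
    intro x
    have h1 : HasDerivAt (fun x => (inner ℝ (v x) (v x) : ℝ))
        ((inner ℝ (v x) (deriv v x) : ℝ) + (inner ℝ (deriv v x) (v x) : ℝ)) x :=
      (hdv x).hasDerivAt.inner ℝ (hdv x).hasDerivAt
    have h2 : HasDerivAt f (2 * (inner ℝ (deriv v x) (v x) : ℝ)) x := by
      have : f = fun x => (inner ℝ (v x) (v x) : ℝ) - l ^ 2 := by
        funext y; simp only [hf, real_inner_self_eq_norm_sq]
      rw [this]
      have := h1.sub_const (l ^ 2)
      refine this.congr_deriv ?_
      rw [real_inner_comm (v x) (deriv v x)]; ring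
    convert h2 using 1
    rw [hkey x]
    simp only [hg, hf]
    ring
  -- G = ∫ g, exp trick
  set G : ℝ → ℝ := fun x => ∫ t in (0:ℝ)..x, g t with hG
  have hG' : ∀ x, HasDerivAt G (g x) x := fun x =>
    intervalIntegral.integral_hasDerivAt_right (hcontg.intervalIntegrable 0 x)
      (hcontg.stronglyMeasurableAtFilter _ _) hcontg.continuousAt
  set h : ℝ → ℝ := fun x => f x * Real.exp (-G x) with hh
  have hh' : ∀ x, HasDerivAt h 0 x := by
    intro x
    have hE : HasDerivAt (fun x => Real.exp (-G x)) (-g x * Real.exp (-G x)) x := by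
      have := ((hG' x).neg).exp
      simpa [mul_comm] using this
    have := (hf' x).mul hE
    refine this.congr_deriv ?_
    ring
  have hconst : ∀ x, h x = h 0 := fun x =>
    is_const_of_deriv_eq_zero (fun y => (hh' y).differentiableAt)
      (fun y => (hh' y).deriv) x 0
  have hf0 : f 0 = 0 := by simp [hf, hlen0]
  have hfzero : ∀ x, f x = 0 := by
    intro x
    have := hconst x
    rw [hh] at this
    simp only [hf0, zero_mul] at this
    have hexp := Real.exp_pos (-G x)
    exact (mul_eq_zero.mp this).resolve_right (ne_of_gt hexp)
  have hnorm : ∀ x, ‖v x‖ = l := by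
    intro x
    have : ‖v x‖ ^ 2 = l ^ 2 := by have := hfzero x; simp [hf] at this; linarith
    calc ‖v x‖ = Real.sqrt (‖v x‖ ^ 2) := (Real.sqrt_sq (norm_nonneg _)).symm
      _ = Real.sqrt (l ^ 2) := by rw [this]
      _ = l := Real.sqrt_sq hl.le
  refine ⟨fun x => ?_, hnorm, fun x => by simpa using hnorm x⟩
  rw [hkey x, hnorm x]
  ring
end

section
/- Suppose quaternions ρ̂, ρ̃ ∈ ℍ with ρ̂ - ρ̃ invertible are given. Define ρ̃̂ = (ρ̂ - ρ̃) ρ̃ (ρ̂ - ρ̃)⁻¹ and ρ̂̃ = (ρ̂ - ρ̃) ρ̂ (ρ̂ - ρ̃)⁻¹. Then the permutability identity (1 + λρ̃̂)(1 + λρ̂) = (1 + λρ̂̃)(1 + λρ̃) holds for all real λ. -/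
/-!
Write `d = ρ̂ - ρ̃`. Expanding both products in `λ`, the constant terms agree, the linear terms
agree because conjugating `ρ̂ = ρ̃ + d` by `d` gives `ρ̂̃ = ρ̃̂ + d`, and the quadratic terms agree
because `ρ̃ d⁻¹ ρ̂` and `ρ̂ d⁻¹ ρ̃` both equal `ρ̃ d⁻¹ ρ̃ + ρ̃`.
-/

theorem one_add_smul_mul_one_add_smul {R A : Type*} [CommSemiring R] [Semiring A] [Algebra R A]
    (t : R) (x y : A) :
    (1 + t • x) * (1 + t • y) = 1 + t • (x + y) + (t * t) • (x * y) := by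
  simp only [mul_add, add_mul, one_mul, mul_one, smul_mul_smul_comm, smul_add]
  abel

section DivisionRing

variable {D : Type*} [DivisionRing D]

theorem mul_inv_sub_mul_comm (a b : D) : b * (a - b)⁻¹ * a = a * (a - b)⁻¹ * b := by
  rcases eq_or_ne a b with rfl | hab
  · simp
  have hd : a - b ≠ 0 := sub_ne_zero.2 hab
  calc b * (a - b)⁻¹ * a = b * (a - b)⁻¹ * (b + (a - b)) := by rw [add_sub_cancel]
    _ = b * (a - b)⁻¹ * b + b := by rw [mul_add, inv_mul_cancel_right₀ hd]
    _ = (b + (a - b)) * (a - b)⁻¹ * b := by rw [add_mul, add_mul, mul_inv_cancel₀ hd, one_mul]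
    _ = a * (a - b)⁻¹ * b := by rw [add_sub_cancel]

theorem sub_mul_mul_inv_sub_eq_add (a b : D) :
    (a - b) * a * (a - b)⁻¹ = (a - b) * b * (a - b)⁻¹ + (a - b) := by
  calc (a - b) * a * (a - b)⁻¹ = (a - b) * (b + (a - b)) * (a - b)⁻¹ := by rw [add_sub_cancel]
    _ = (a - b) * b * (a - b)⁻¹ + (a - b) := by rw [mul_add, add_mul, mul_self_mul_inv]

theorem sub_mul_mul_inv_sub_mul_comm (a b : D) :
    (a - b) * b * (a - b)⁻¹ * a = (a - b) * a * (a - b)⁻¹ * b := by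
  simp only [mul_assoc (a - b), mul_inv_sub_mul_comm]

theorem one_add_smul_conj_mul_one_add_smul_comm {R : Type*} [CommSemiring R] [Algebra R D]
    (a b : D) (t : R) :
    (1 + t • ((a - b) * b * (a - b)⁻¹)) * (1 + t • a) =
      (1 + t • ((a - b) * a * (a - b)⁻¹)) * (1 + t • b) := by
  rw [one_add_smul_mul_one_add_smul, one_add_smul_mul_one_add_smul,
    sub_mul_mul_inv_sub_mul_comm, sub_mul_mul_inv_sub_eq_add a b, add_assoc _ (a - b),
    sub_add_cancel]

end DivisionRing

theorem bianchi_permutability_general (ρh ρt : Quaternion ℝ) :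
    ∀ lam : ℝ,
      (1 + lam • ((ρh - ρt) * ρt * (ρh - ρt)⁻¹)) * (1 + lam • ρh) =
      (1 + lam • ((ρh - ρt) * ρh * (ρh - ρt)⁻¹)) * (1 + lam • ρt) :=
  one_add_smul_conj_mul_one_add_smul_comm ρh ρt

/-- Bianchi permutability identity: with `ρ̃̂ = (ρ̂-ρ̃) ρ̃ (ρ̂-ρ̃)⁻¹` and
`ρ̂̃ = (ρ̂-ρ̃) ρ̂ (ρ̂-ρ̃)⁻¹`, one has
`(1 + λ ρ̃̂)(1 + λ ρ̂) = (1 + λ ρ̂̃)(1 + λ ρ̃)` for all real `λ`. -/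
theorem bianchi_permutability (ρh ρt : Quaternion ℝ) (h : ρh - ρt ≠ 0) :
    ∀ lam : ℝ,
      (1 + lam • ((ρh - ρt) * ρt * (ρh - ρt)⁻¹)) * (1 + lam • ρh) =
      (1 + lam • ((ρh - ρt) * ρh * (ρh - ρt)⁻¹)) * (1 + lam • ρt) :=
  bianchi_permutability_general ρh ρt
end

section
/- Conversely, if ρ̂, ρ̃, ρ̃̂, ρ̂̃ ∈ ℍ satisfy (1 + λρ̃̂)(1 + λρ̂) = (1 + λρ̂̃)(1 + λρ̃) for all real λ, and ρ̂ - ρ̃ is invertible, then necessarily ρ̃̂ = (ρ̂ - ρ̃) ρ̃ (ρ̂ - ρ̃)⁻¹ and ρ̂̃ = (ρ̂ - ρ̃) ρ̂ (ρ̂ - ρ̃)⁻¹. -/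
/-- Converse of Bianchi permutability: if
`(1 + λ ρ̃̂)(1 + λ ρ̂) = (1 + λ ρ̂̃)(1 + λ ρ̃)` for all real `λ` and `ρ̂ - ρ̃`
is invertible, then `ρ̃̂ = (ρ̂-ρ̃) ρ̃ (ρ̂-ρ̃)⁻¹` and
`ρ̂̃ = (ρ̂-ρ̃) ρ̂ (ρ̂-ρ̃)⁻¹`. -/
theorem bianchi_permutability_unique (ρh ρt ρth ρht : Quaternion ℝ)
    (h : ρh - ρt ≠ 0)
    (hperm : ∀ lam : ℝ,
      (1 + lam • ρth) * (1 + lam • ρh) = (1 + lam • ρht) * (1 + lam • ρt)) :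
    ρth = (ρh - ρt) * ρt * (ρh - ρt)⁻¹ ∧
    ρht = (ρh - ρt) * ρh * (ρh - ρt)⁻¹ := by
  have h1 := hperm 1
  have h2 := hperm (-1)
  simp only [one_smul, neg_smul, neg_one_smul] at h1 h2
  have two_ne : (2 : Quaternion ℝ) ≠ 0 := by
    intro h0
    have h0' : (1 : Quaternion ℝ) + 1 = 0 := by rw [one_add_one_eq_two]; exact h0
    have := congrArg QuaternionAlgebra.re h0'
    simp [Quaternion.re_one, Quaternion.re_zero] at this
  have hB : ρth * ρh = ρht * ρt := by
    have key : (2 : Quaternion ℝ) + 2 * (ρth * ρh) = 2 + 2 * (ρht * ρt) := by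
      calc (2 : Quaternion ℝ) + 2 * (ρth * ρh)
          = (1 + ρth) * (1 + ρh) + (1 + -ρth) * (1 + -ρh) := by noncomm_ring <;> simp only [two_smul, smul_eq_mul, one_add_one_eq_two] <;> abel
        _ = (1 + ρht) * (1 + ρt) + (1 + -ρht) * (1 + -ρt) := by rw [h1, h2]
        _ = 2 + 2 * (ρht * ρt) := by noncomm_ring <;> simp only [two_smul, smul_eq_mul, one_add_one_eq_two] <;> abel
    exact mul_left_cancel₀ two_ne (add_left_cancel key)
  have hA : ρth + ρh = ρht + ρt := by
    have key : (2 : Quaternion ℝ) * (ρth + ρh) = 2 * (ρht + ρt) := by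
      calc (2 : Quaternion ℝ) * (ρth + ρh)
          = (1 + ρth) * (1 + ρh) - (1 + -ρth) * (1 + -ρh) := by noncomm_ring <;> simp only [two_smul, smul_eq_mul, one_add_one_eq_two] <;> abel
        _ = (1 + ρht) * (1 + ρt) - (1 + -ρht) * (1 + -ρt) := by rw [h1, h2]
        _ = 2 * (ρht + ρt) := by noncomm_ring <;> simp only [two_smul, smul_eq_mul, one_add_one_eq_two] <;> abel
    exact mul_left_cancel₀ two_ne key
  have hd : ρht - ρth = ρh - ρt := by
    rw [sub_eq_sub_iff_add_eq_add, ← hA, add_comm]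
  constructor
  · rw [eq_mul_inv_iff_mul_eq₀ h]
    calc ρth * (ρh - ρt) = ρth * ρh - ρth * ρt := by noncomm_ring <;> simp only [two_smul, smul_eq_mul, one_add_one_eq_two] <;> abel
      _ = ρht * ρt - ρth * ρt := by rw [hB]
      _ = (ρht - ρth) * ρt := by noncomm_ring <;> simp only [two_smul, smul_eq_mul, one_add_one_eq_two] <;> abel
      _ = (ρh - ρt) * ρt := by rw [hd]
  · rw [eq_mul_inv_iff_mul_eq₀ h]
    calc ρht * (ρh - ρt) = ρht * ρh - ρht * ρt := by noncomm_ring <;> simp only [two_smul, smul_eq_mul, one_add_one_eq_two] <;> abel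
      _ = ρht * ρh - ρth * ρh := by rw [hB]
      _ = (ρht - ρth) * ρh := by noncomm_ring <;> simp only [two_smul, smul_eq_mul, one_add_one_eq_two] <;> abel
      _ = (ρh - ρt) * ρh := by rw [hd]
end

section
/- For a discrete arclength-parametrized curve evolving by the discrete Hashimoto flow γ̇_k = 2 (S_k × S_{k-1})/(1 + ⟨S_k, S_{k-1}⟩) with S_k = γ_{k+1} - γ_k, the tangent vectors satisfy the discrete Heisenberg magnet equation Ṡ_k = 2(S_{k+1} × S_k)/(1 + ⟨S_{k+1}, S_k⟩) - 2(S_k × S_{k-1})/(1 + ⟨S_k, S_{k-1}⟩). -/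
/-- If a discrete arclength parametrized curve evolves by the discrete
Hashimoto flow `γ̇_k = 2 (S_k × S_{k-1})/(1 + ⟨S_k,S_{k-1}⟩)`, then the tangents
`S_k = γ_{k+1} - γ_k` satisfy the discrete Heisenberg magnet equation
`Ṡ_k = 2(S_{k+1}×S_k)/(1+⟨S_{k+1},S_k⟩) - 2(S_k×S_{k-1})/(1+⟨S_k,S_{k-1}⟩)`. -/
theorem discrete_hashimoto_implies_heisenberg
    (γ : ℤ → ℝ → EuclideanSpace ℝ (Fin 3))
    (S : ℤ → ℝ → EuclideanSpace ℝ (Fin 3))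
    (hS : ∀ (k : ℤ) (t : ℝ), S k t = γ (k + 1) t - γ k t)
    (hdiff : ∀ k : ℤ, Differentiable ℝ (γ k))
    (harc : ∀ (k : ℤ) (t : ℝ), ‖S k t‖ = 1)
    (hden : ∀ (k : ℤ) (t : ℝ), (inner ℝ (S k t) (S (k - 1) t) : ℝ) ≠ -1)
    (hflow : ∀ (k : ℤ) (t : ℝ), deriv (γ k) t =
      (2 / (1 + (inner ℝ (S k t) (S (k - 1) t) : ℝ))) •
        cross3 (S k t) (S (k - 1) t)) :
    ∀ (k : ℤ) (t : ℝ), deriv (fun s => S k s) t =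
      (2 / (1 + (inner ℝ (S (k + 1) t) (S k t) : ℝ))) •
        cross3 (S (k + 1) t) (S k t) -
      (2 / (1 + (inner ℝ (S k t) (S (k - 1) t) : ℝ))) •
        cross3 (S k t) (S (k - 1) t) := by
  intro k t
  have hfun : (fun s => S k s) = fun s => γ (k + 1) s - γ k s := by
    funext s; exact hS k s
  have hd : deriv (fun s => S k s) t = deriv (γ (k + 1)) t - deriv (γ k) t := by
    rw [hfun, deriv_fun_sub ((hdiff (k + 1)).differentiableAt) ((hdiff k).differentiableAt)]
  have h1 := hflow (k + 1) t
  have h2 := hflow k t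
  simp only [add_sub_cancel_right] at h1
  rw [hd, h1, h2]
end
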